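/- arXiv:0812.3724 — 4 statements merged into one kernel-verified Lean document; each statement's English description precedes it below -/
import Mathlib

section
/- For every complex number z and real x, ∑_{n=0}^∞ (z^n/√(n!)) φ_n(x) = π^{-1/4} exp(−(z² + x²)/2) exp(√2 · z x), where φ_n are the normalized Hermite functions. -/
/-- The physicists' Hermite polynomials via the Rodrigues formula. -/
noncomputable def hermitePoly (n : ℕ) (x : ℝ) : ℝ :=
  (-1 : ℝ) ^ n * Real.exp (x ^ 2) * iteratedDeriv n (fun y => Real.exp (-y ^ 2)) x

/-- The normalized Hermite functions `φ_n(x) = e^{-x²/2} H_n(x) / √(2^n n! √π)`. -/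
noncomputable def hermiteFun (n : ℕ) (x : ℝ) : ℝ :=
  Real.exp (-x ^ 2 / 2) * hermitePoly n x
    / Real.sqrt (2 ^ n * n.factorial * Real.sqrt Real.pi)

/-!
By the Rodrigues formula, `∑ Hₙ(x) tⁿ / n!` is `e^{x²}` times the Taylor series of the entire
function `e^{-w²}` about `w = x`, evaluated at `w = x - t`; hence it equals `e^{2xt - t²}`.
Substituting `t = z / √2` and unfolding the normalization of `φₙ` gives the formula.
-/

open Complex Nat

theorem deriv_complex_eq_ofReal_deriv {f : ℂ → ℂ} {g : ℝ → ℝ} (hf : Differentiable ℂ f)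
    (hfg : ∀ y : ℝ, f y = g y) (x : ℝ) : deriv f x = deriv g x := by
  have hf' : HasDerivAt f (deriv f x) x := (hf x).hasDerivAt
  have hg : HasDerivAt g (deriv f x).re x := by
    simpa only [hfg, ofReal_re] using hf'.real_of_complex
  have hg' : HasDerivAt (fun y : ℝ => (g y : ℂ)) (deriv f x) x := by
    simpa only [hfg] using hf'.comp_ofReal
  rw [hg.deriv]
  exact hg'.unique hg.ofReal_comp

theorem iteratedDeriv_complex_eq_ofReal_iteratedDeriv {f : ℂ → ℂ} {g : ℝ → ℝ}
    (hf : Differentiable ℂ f) (hfg : ∀ y : ℝ, f y = g y) (n : ℕ) (x : ℝ) :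
    iteratedDeriv n f x = iteratedDeriv n g x := by
  induction n generalizing x with
  | zero => simpa using hfg x
  | succ n ih =>
    have hfn : Differentiable ℂ (iteratedDeriv n f) :=
      (hf.contDiff (n := ⊤)).differentiable_iteratedDeriv n (WithTop.coe_lt_top _)
    rw [iteratedDeriv_succ, iteratedDeriv_succ]
    exact deriv_complex_eq_ofReal_deriv hfn ih x

theorem hasSum_hermitePoly_generating (x : ℝ) (t : ℂ) :
    HasSum (fun n => t ^ n / n ! * (hermitePoly n x : ℂ)) (exp (2 * x * t - t ^ 2)) := by
  have hg : Differentiable ℂ fun w : ℂ => exp (-w ^ 2) := ((differentiable_pow 2).neg).cexp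
  have hgx : ∀ y : ℝ, exp (-(y : ℂ) ^ 2) = (Real.exp (-y ^ 2) : ℂ) := by
    intro y; push_cast [ofReal_exp]; rfl
  have taylor := (hasSum_taylorSeries_of_entire hg x (x - t)).mul_left (exp ((x : ℂ) ^ 2))
  rw [← exp_add, show (x : ℂ) ^ 2 + -(x - t) ^ 2 = 2 * x * t - t ^ 2 by ring] at taylor
  refine taylor.congr_fun fun n => ?_
  rw [iteratedDeriv_complex_eq_ofReal_iteratedDeriv hg hgx, hermitePoly, smul_eq_mul, smul_eq_mul,
    show (x : ℂ) - t - x = -1 * t by ring]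
  push_cast [ofReal_exp]
  ring

theorem sqrt_two_pow_mul_factorial_mul_sqrt_pi (n : ℕ) :
    Real.sqrt (2 ^ n * n ! * Real.sqrt Real.pi)
      = Real.sqrt 2 ^ n * Real.sqrt n ! * Real.pi ^ (1 / 4 : ℝ) := by
  have sqrt_two_pow : √(2 ^ n : ℝ) = √2 ^ n := by
    rw [← Real.sqrt_sq (by positivity : (0 : ℝ) ≤ √2 ^ n), ← pow_mul, mul_comm, pow_mul,
      Real.sq_sqrt zero_le_two]
  have sqrt_sqrt_pi : √√Real.pi = Real.pi ^ (1 / 4 : ℝ) := by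
    rw [Real.sqrt_eq_rpow, Real.sqrt_eq_rpow, ← Real.rpow_mul Real.pi_pos.le]
    norm_num
  rw [Real.sqrt_mul (by positivity), Real.sqrt_mul (by positivity), sqrt_two_pow, sqrt_sqrt_pi]

theorem ofReal_sqrt_mul_self {r : ℝ} (hr : 0 ≤ r) : (√r : ℂ) * √r = r := by
  norm_cast; exact Real.mul_self_sqrt hr

theorem pow_div_sqrt_factorial_mul_hermiteFun (z : ℂ) (x : ℝ) (n : ℕ) :
    z ^ n / (√n ! : ℂ) * (hermiteFun n x : ℂ)
      = ((Real.pi ^ (-(1 / 4 : ℝ)) : ℝ) : ℂ) * exp (-(x : ℂ) ^ 2 / 2)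
        * ((z / √2) ^ n / n ! * (hermitePoly n x : ℂ)) := by
  have hfact : (√n ! : ℂ) ≠ 0 := by norm_cast; positivity
  have hfact_ne : (n ! : ℂ) ≠ 0 := Nat.cast_ne_zero.mpr n.factorial_ne_zero
  have hfact_sq : (√n ! : ℂ) * √n ! = n ! := by
    exact_mod_cast ofReal_sqrt_mul_self (Nat.cast_nonneg n !)
  have hsqrt2 : (√2 : ℂ) ≠ 0 := by norm_cast; positivity
  rw [hermiteFun, sqrt_two_pow_mul_factorial_mul_sqrt_pi, Real.rpow_neg Real.pi_pos.le]
  push_cast [ofReal_exp]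
  rw [div_pow]
  field_simp
  rw [sq, hfact_sq]
  ring

/-- `∑ (zⁿ/√(n!)) φ_n(x) = π^{-1/4} exp(−(z²+x²)/2) exp(√2·zx)` for `z ∈ ℂ`, `x ∈ ℝ`. -/
theorem exponential_vector_formula (z : ℂ) (x : ℝ) :
    ∑' n : ℕ, z ^ n / (Real.sqrt n.factorial : ℂ) * (hermiteFun n x : ℂ)
      = ((Real.pi ^ (-(1 / 4 : ℝ)) : ℝ) : ℂ)
        * Complex.exp (-(z ^ 2 + (x : ℂ) ^ 2) / 2)
        * Complex.exp ((Real.sqrt 2 : ℂ) * z * x) := by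
  have h := (hasSum_hermitePoly_generating x (z / √2)).mul_left
    (((Real.pi ^ (-(1 / 4 : ℝ)) : ℝ) : ℂ) * exp (-(x : ℂ) ^ 2 / 2))
  rw [(h.congr_fun (pow_div_sqrt_factorial_mul_hermiteFun z x)).tsum_eq]
  simp only [mul_assoc, ← exp_add]
  congr 2
  have hsqrt2 : (√2 : ℂ) ≠ 0 := by norm_cast; positivity
  have hsqrt2_sq : (√2 : ℂ) ^ 2 = 2 := by rw [sq, ofReal_sqrt_mul_self zero_le_two, ofReal_ofNat]
  field_simp
  linear_combination (z ^ 2 - 2 * (x : ℂ) * √2 * z) * hsqrt2_sq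
end

section
/- Let A be a positive (semidefinite) invertible 3×3 block matrix with blocks A_{ij} on a direct sum H₁ ⊕ H₂ ⊕ H₃ of finite-dimensional spaces, with A_{22} invertible, and define D = Diag(I, [[A_{22},A_{23}],[A_{32},A_{33}]]), B = Diag([[A_{11},A_{12}],[A_{21},A_{22}]], I), C = Diag(I, A_{22}, I) (as block matrices on H₁⊕H₂⊕H₃). If A⁻¹(I+A) D (I+D)⁻¹ = B⁻¹(I+B) C (I+C)⁻¹, then A_{13} = A_{12} A_{22}⁻¹ A_{23} and A_{13} = A_{12} (A_{22}+I)⁻¹ A_{23}. -/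
/-!
Clearing denominators turns the hypothesis into `(1 + A) D = A G (1 + D)`, where
`G = B⁻¹(1 + B) C (1 + C)⁻¹ = Diag(M⁻¹(1 + M) E (1 + E)⁻¹, I)` with `M = [[A₁₁, A₁₂], [A₂₁, A₂₂]]`
and `E = Diag(I, A₂₂)`. Write `A = [[M, X], [X*, A₃₃]]` and `D = [[E, P], [P*, A₃₃]]`. Since `A`
and `D` share the corner `A₃₃`, the off-diagonal blocks of this identity are linear in `X` and `P`:
the upper one gives `X = (1 + M)(1 + E)⁻¹ P`, the lower one `P* = X* M⁻¹ E`, i.e. `X = M E⁻¹ P`.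
As `P = [0; A₂₃]`, the top rows of these two identities are the two formulas for `A₁₃`.
-/

open Matrix
open scoped ComplexOrder

variable {n1 n2 n3 : ℕ}

/-- The 3×3 block matrix `A` on `H₁ ⊕ H₂ ⊕ H₃` (grouped as `(H₁ ⊕ H₂) ⊕ H₃`). -/
def blockA (A11 : Matrix (Fin n1) (Fin n1) ℂ) (A12 : Matrix (Fin n1) (Fin n2) ℂ)
    (A13 : Matrix (Fin n1) (Fin n3) ℂ) (A21 : Matrix (Fin n2) (Fin n1) ℂ)
    (A22 : Matrix (Fin n2) (Fin n2) ℂ) (A23 : Matrix (Fin n2) (Fin n3) ℂ)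
    (A31 : Matrix (Fin n3) (Fin n1) ℂ) (A32 : Matrix (Fin n3) (Fin n2) ℂ)
    (A33 : Matrix (Fin n3) (Fin n3) ℂ) :
    Matrix ((Fin n1 ⊕ Fin n2) ⊕ Fin n3) ((Fin n1 ⊕ Fin n2) ⊕ Fin n3) ℂ :=
  fromBlocks (fromBlocks A11 A12 A21 A22) (fromRows A13 A23) (fromCols A31 A32) A33

/-- `D = Diag(I, [[A₂₂,A₂₃],[A₃₂,A₃₃]])`. -/
def blockD (A22 : Matrix (Fin n2) (Fin n2) ℂ) (A23 : Matrix (Fin n2) (Fin n3) ℂ)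
    (A32 : Matrix (Fin n3) (Fin n2) ℂ) (A33 : Matrix (Fin n3) (Fin n3) ℂ) :
    Matrix ((Fin n1 ⊕ Fin n2) ⊕ Fin n3) ((Fin n1 ⊕ Fin n2) ⊕ Fin n3) ℂ :=
  fromBlocks (fromBlocks 1 0 0 A22) (fromRows 0 A23) (fromCols 0 A32) A33

/-- `B = Diag([[A₁₁,A₁₂],[A₂₁,A₂₂]], I)`. -/
def blockB (A11 : Matrix (Fin n1) (Fin n1) ℂ) (A12 : Matrix (Fin n1) (Fin n2) ℂ)
    (A21 : Matrix (Fin n2) (Fin n1) ℂ) (A22 : Matrix (Fin n2) (Fin n2) ℂ) :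
    Matrix ((Fin n1 ⊕ Fin n2) ⊕ Fin n3) ((Fin n1 ⊕ Fin n2) ⊕ Fin n3) ℂ :=
  fromBlocks (fromBlocks A11 A12 A21 A22) 0 0 1

/-- `C = Diag(I, A₂₂, I)`. -/
def blockC (A22 : Matrix (Fin n2) (Fin n2) ℂ) :
    Matrix ((Fin n1 ⊕ Fin n2) ⊕ Fin n3) ((Fin n1 ⊕ Fin n2) ⊕ Fin n3) ℂ :=
  fromBlocks (fromBlocks 1 0 0 A22) 0 0 1

section Algebra

variable {m n o R : Type*} [Fintype m] [Fintype n] [DecidableEq m] [DecidableEq n] [CommRing R]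

noncomputable def markovMap (Z W : Matrix n n R) : Matrix n n R :=
  Z⁻¹ * (1 + Z) * W * (1 + W)⁻¹

omit [Fintype m] [Fintype n] in
theorem one_add_fromBlocks (K₁₁ : Matrix m m R) (K₁₂ : Matrix m n R) (K₂₁ : Matrix n m R)
    (K₂₂ : Matrix n n R) :
    1 + fromBlocks K₁₁ K₁₂ K₂₁ K₂₂ = fromBlocks (1 + K₁₁) K₁₂ K₂₁ (1 + K₂₂) := by
  rw [← fromBlocks_one, fromBlocks_add, zero_add, zero_add]

theorem inv_fromBlocks_zero_zero {L : Matrix m m R} {L' : Matrix n n R}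
    (h : IsUnit L ↔ IsUnit L') : (fromBlocks L 0 0 L')⁻¹ = fromBlocks L⁻¹ 0 0 L'⁻¹ := by
  simp [inv_fromBlocks_zero₂₁_of_isUnit_iff _ _ _ h]

theorem mul_inv_one_add {W : Matrix n n R} (hW : IsUnit (1 + W)) :
    W * (1 + W)⁻¹ = 1 - (1 + W)⁻¹ := by
  rw [eq_sub_iff_add_eq, ← add_one_mul, add_comm W,
    mul_nonsing_inv _ ((isUnit_iff_isUnit_det _).mp hW)]

theorem inv_mul_one_add {Z : Matrix n n R} (hZ : IsUnit Z) : Z⁻¹ * (1 + Z) = Z⁻¹ + 1 := by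
  rw [mul_add, mul_one, nonsing_inv_mul _ ((isUnit_iff_isUnit_det _).mp hZ)]

theorem mul_markovMap_mul {Z W : Matrix n n R} (hZ : IsUnit Z) (hW : IsUnit (1 + W)) :
    Z * markovMap Z W * (1 + W) = (1 + Z) * W := by
  simp only [markovMap, Matrix.mul_assoc, nonsing_inv_mul _ ((isUnit_iff_isUnit_det _).mp hW),
    Matrix.mul_one]
  rw [← Matrix.mul_assoc Z, mul_nonsing_inv _ ((isUnit_iff_isUnit_det _).mp hZ), Matrix.one_mul]

theorem markovMap_fromBlocks_zero_zero {Z₁ W₁ : Matrix m m R} {Z₂ W₂ : Matrix n n R}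
    (hZ₁ : IsUnit Z₁) (hZ₂ : IsUnit Z₂) (hW₁ : IsUnit (1 + W₁)) (hW₂ : IsUnit (1 + W₂)) :
    markovMap (fromBlocks Z₁ 0 0 Z₂) (fromBlocks W₁ 0 0 W₂)
      = fromBlocks (markovMap Z₁ W₁) 0 0 (markovMap Z₂ W₂) := by
  simp only [markovMap, one_add_fromBlocks, inv_fromBlocks_zero_zero (iff_of_true hZ₁ hZ₂),
    inv_fromBlocks_zero_zero (iff_of_true hW₁ hW₂), fromBlocks_multiply]
  simp

theorem markovMap_one_one (h : IsUnit (1 + 1 : Matrix n n R)) :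
    markovMap (1 : Matrix n n R) 1 = 1 := by
  rw [markovMap, inv_one, Matrix.one_mul, Matrix.mul_one,
    mul_nonsing_inv _ ((isUnit_iff_isUnit_det _).mp h)]

theorem mul_markovMap {Z W : Matrix n n R} (hZ : IsUnit Z) (hW : IsUnit (1 + W)) :
    Z * markovMap Z W = (1 + Z) - (1 + Z) * (1 + W)⁻¹ := by
  rw [markovMap, Matrix.mul_assoc, Matrix.mul_assoc, ← Matrix.mul_assoc Z,
    mul_nonsing_inv _ ((isUnit_iff_isUnit_det _).mp hZ), Matrix.one_mul, mul_inv_one_add hW,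
    Matrix.mul_sub, Matrix.mul_one]

theorem markovMap_mul_one_add {Z W : Matrix n n R} (hZ : IsUnit Z) (hW : IsUnit (1 + W)) :
    markovMap Z W * (1 + W) = Z⁻¹ * W + W := by
  rw [markovMap, Matrix.mul_assoc, nonsing_inv_mul _ ((isUnit_iff_isUnit_det _).mp hW),
    Matrix.mul_one, inv_mul_one_add hZ, Matrix.add_mul, Matrix.one_mul]

theorem eq_of_markovMap_fromBlocks_eq {M E : Matrix m m R} {X P : Matrix m n R}
    {Y Q : Matrix n m R} {N : Matrix n n R}
    (hA : IsUnit (fromBlocks M X Y N)) (hD : IsUnit (1 + fromBlocks E P Q N))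
    (hM : IsUnit M) (hE : IsUnit (1 + E))
    (h : markovMap (fromBlocks M X Y N) (fromBlocks E P Q N) = fromBlocks (markovMap M E) 0 0 1) :
    X = (1 + M) * (1 + E)⁻¹ * P ∧ Q = Y * M⁻¹ * E := by
  have key := mul_markovMap_mul hA hD
  rw [h, one_add_fromBlocks, one_add_fromBlocks, fromBlocks_multiply, fromBlocks_multiply,
    fromBlocks_multiply, fromBlocks_inj] at key
  simp only [Matrix.mul_zero, add_zero, zero_add, Matrix.mul_one] at key
  obtain ⟨-, h₁₂, h₂₁, -⟩ := key
  rw [mul_markovMap hM hE, Matrix.sub_mul, Matrix.mul_add X, Matrix.mul_one] at h₁₂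
  rw [Matrix.mul_assoc Y, markovMap_mul_one_add hM hE, Matrix.mul_add, Matrix.add_mul,
    Matrix.one_mul] at h₂₁
  constructor
  · calc X = (1 + M) * P - (1 + M) * (1 + E)⁻¹ * P + (X + X * N) - ((1 + M) * P + X * N)
          + (1 + M) * (1 + E)⁻¹ * P := by abel
      _ = (1 + M) * (1 + E)⁻¹ * P := by rw [h₁₂]; abel
  · calc Q = Y * E + (Q + N * Q) - (Y * (M⁻¹ * E) + Y * E + N * Q) + Y * (M⁻¹ * E) := by abel
      _ = Y * M⁻¹ * E := by rw [h₂₁, Matrix.mul_assoc]; abel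

omit [Fintype n] [DecidableEq n] in
theorem eq_mul_inv_mul_of_conjTranspose_eq [StarRing R] {M E : Matrix m m R} {X P : Matrix m n R}
    (hM : M.IsHermitian) (hMu : IsUnit M) (hE : E.IsHermitian) (hEu : IsUnit E)
    (h : Pᴴ = Xᴴ * M⁻¹ * E) : X = M * E⁻¹ * P := by
  have hP : P = E * M⁻¹ * X := by
    simpa [conjTranspose_mul, hM.inv.eq, hE.eq, Matrix.mul_assoc] using congrArg conjTranspose h
  rw [hP, Matrix.mul_assoc M, ← Matrix.mul_assoc E⁻¹, ← Matrix.mul_assoc E⁻¹,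
    nonsing_inv_mul _ ((isUnit_iff_isUnit_det _).mp hEu), Matrix.one_mul, ← Matrix.mul_assoc,
    mul_nonsing_inv _ ((isUnit_iff_isUnit_det _).mp hMu), Matrix.one_mul]

theorem toRows₁_fromBlocks_mul_inv_mul_fromRows_zero {L : Matrix m m R} {L' : Matrix n n R}
    (h : IsUnit L ↔ IsUnit L') (K₁₁ : Matrix m m R) (K₁₂ : Matrix m n R) (K₂₁ : Matrix n m R)
    (K₂₂ : Matrix n n R) (V : Matrix n o R) :
    (fromBlocks K₁₁ K₁₂ K₂₁ K₂₂ * (fromBlocks L 0 0 L')⁻¹ * fromRows (0 : Matrix m o R) V).toRows₁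
      = K₁₂ * L'⁻¹ * V := by
  simp [inv_fromBlocks_zero_zero h, fromBlocks_mul_fromRows, Matrix.mul_assoc]

end Algebra

section Positivity

theorem Matrix.PosSemidef.fromBlocks_zero_zero {m n R : Type*} [Fintype m] [Fintype n] [Ring R]
    [PartialOrder R] [StarRing R] [IsOrderedAddMonoid R] {Z₁ : Matrix m m R} {Z₂ : Matrix n n R}
    (h₁ : Z₁.PosSemidef) (h₂ : Z₂.PosSemidef) : (fromBlocks Z₁ 0 0 Z₂).PosSemidef := by
  refine .of_dotProduct_mulVec_nonneg (h₁.isHermitian.fromBlocks (by simp) h₂.isHermitian)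
    fun x => ?_
  rw [← Sum.elim_comp_inl_inr x, fromBlocks_mulVec]
  simp only [Matrix.zero_mulVec, add_zero, zero_add, Sum.elim_comp_inl, Sum.elim_comp_inr,
    Function.star_sumElim, sumElim_dotProduct_sumElim]
  exact add_nonneg (h₁.dotProduct_mulVec_nonneg _) (h₂.dotProduct_mulVec_nonneg _)

theorem isUnit_one_add_of_posSemidef {n 𝕜 : Type*} [Fintype n] [DecidableEq n] [RCLike 𝕜]
    {Z : Matrix n n 𝕜} (hZ : Z.PosSemidef) : IsUnit (1 + Z) :=
  (PosDef.one.add_posSemidef hZ).isUnit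

end Positivity

theorem posSemidef_blockD {A11 : Matrix (Fin n1) (Fin n1) ℂ} {A12 : Matrix (Fin n1) (Fin n2) ℂ}
    {A13 : Matrix (Fin n1) (Fin n3) ℂ} {A21 : Matrix (Fin n2) (Fin n1) ℂ}
    {A22 : Matrix (Fin n2) (Fin n2) ℂ} {A23 : Matrix (Fin n2) (Fin n3) ℂ}
    {A31 : Matrix (Fin n3) (Fin n1) ℂ} {A32 : Matrix (Fin n3) (Fin n2) ℂ}
    {A33 : Matrix (Fin n3) (Fin n3) ℂ}
    (hA : (blockA A11 A12 A13 A21 A22 A23 A31 A32 A33).PosSemidef) :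
    (blockD (n1 := n1) A22 A23 A32 A33).PosSemidef := by
  have hD : blockD (n1 := n1) A22 A23 A32 A33
      = (fromBlocks (1 : Matrix (Fin n1) (Fin n1) ℂ) 0 0
          ((blockA A11 A12 A13 A21 A22 A23 A31 A32 A33).submatrix (Sum.map Sum.inr id)
            (Sum.map Sum.inr id))).submatrix (Equiv.sumAssoc _ _ _) (Equiv.sumAssoc _ _ _) := by
    ext (⟨i | i⟩ | i) (⟨j | j⟩ | j) <;> simp [blockA, blockD]
  rw [hD, posSemidef_submatrix_equiv]
  exact PosSemidef.one.fromBlocks_zero_zero (hA.submatrix _)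

theorem markovMap_blockB_blockC {A11 : Matrix (Fin n1) (Fin n1) ℂ}
    {A12 : Matrix (Fin n1) (Fin n2) ℂ} {A21 : Matrix (Fin n2) (Fin n1) ℂ}
    {A22 : Matrix (Fin n2) (Fin n2) ℂ} (hM : IsUnit (fromBlocks A11 A12 A21 A22))
    (hA22 : A22.PosSemidef) :
    markovMap (blockB (n3 := n3) A11 A12 A21 A22) (blockC (n1 := n1) A22)
      = fromBlocks (markovMap (fromBlocks A11 A12 A21 A22) (fromBlocks 1 0 0 A22)) 0 0 1 := by
  have h2 : IsUnit (1 + 1 : Matrix (Fin n3) (Fin n3) ℂ) := isUnit_one_add_of_posSemidef .one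
  rw [blockB, blockC, markovMap_fromBlocks_zero_zero hM isUnit_one
    (isUnit_one_add_of_posSemidef (PosSemidef.one.fromBlocks_zero_zero hA22)) h2,
    markovMap_one_one h2]

theorem markov_necessary_condition_general
    (A11 : Matrix (Fin n1) (Fin n1) ℂ) (A12 : Matrix (Fin n1) (Fin n2) ℂ)
    (A13 : Matrix (Fin n1) (Fin n3) ℂ) (A21 : Matrix (Fin n2) (Fin n1) ℂ)
    (A22 : Matrix (Fin n2) (Fin n2) ℂ) (A23 : Matrix (Fin n2) (Fin n3) ℂ)
    (A31 : Matrix (Fin n3) (Fin n1) ℂ) (A32 : Matrix (Fin n3) (Fin n2) ℂ)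
    (A33 : Matrix (Fin n3) (Fin n3) ℂ)
    (hA : (blockA A11 A12 A13 A21 A22 A23 A31 A32 A33).PosDef)
    (hmain :
      (blockA A11 A12 A13 A21 A22 A23 A31 A32 A33)⁻¹
          * (1 + blockA A11 A12 A13 A21 A22 A23 A31 A32 A33)
          * blockD (n1 := n1) A22 A23 A32 A33
          * (1 + blockD (n1 := n1) A22 A23 A32 A33)⁻¹
        = (blockB (n3 := n3) A11 A12 A21 A22)⁻¹
          * (1 + blockB (n3 := n3) A11 A12 A21 A22)
          * blockC (n1 := n1) (n3 := n3) A22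
          * (1 + blockC (n1 := n1) (n3 := n3) A22)⁻¹) :
    A13 = A12 * A22⁻¹ * A23 ∧ A13 = A12 * (A22 + 1)⁻¹ * A23 := by
  have hM : (fromBlocks A11 A12 A21 A22).PosDef := hA.submatrix Sum.inl_injective
  have hA22 : A22.PosDef := hM.submatrix Sum.inr_injective
  have hE : (fromBlocks (1 : Matrix (Fin n1) (Fin n1) ℂ) 0 0 A22).PosSemidef :=
    PosSemidef.one.fromBlocks_zero_zero hA22.posSemidef
  obtain ⟨hX₁, hQ⟩ := eq_of_markovMap_fromBlocks_eq hA.isUnit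
    (isUnit_one_add_of_posSemidef (posSemidef_blockD hA.posSemidef))
    hM.isUnit (isUnit_one_add_of_posSemidef hE)
    (hmain.trans (markovMap_blockB_blockC hM.isUnit hA22.posSemidef))
  obtain ⟨-, hY, -, -⟩ := isHermitian_fromBlocks_iff.mp hA.isHermitian
  have hQP : (fromRows (0 : Matrix (Fin n1) (Fin n3) ℂ) A23)ᴴ = fromCols 0 A32 := by
    rw [conjTranspose_fromRows_eq_fromCols_conjTranspose] at hY ⊢
    rw [(fromCols_inj hY).2, conjTranspose_zero]
  have hX₂ := eq_mul_inv_mul_of_conjTranspose_eq (X := fromRows A13 A23) hM.isHermitian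
    hM.isUnit hE.isHermitian (by simpa using hA22.isUnit) (by rw [hQP, hY]; exact hQ)
  constructor
  · rw [← toRows₁_fromRows A13 A23, hX₂,
      toRows₁_fromBlocks_mul_inv_mul_fromRows_zero (iff_of_true isUnit_one hA22.isUnit)]
  · rw [← toRows₁_fromRows A13 A23, hX₁, one_add_fromBlocks, one_add_fromBlocks,
      toRows₁_fromBlocks_mul_inv_mul_fromRows_zero (iff_of_true (isUnit_one_add_of_posSemidef .one)
        (isUnit_one_add_of_posSemidef hA22.posSemidef)), add_comm 1 A22]

/-- If the positive definite block matrix `A` satisfies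
`A⁻¹(I+A) D (I+D)⁻¹ = B⁻¹(I+B) C (I+C)⁻¹`, then
`A₁₃ = A₁₂ A₂₂⁻¹ A₂₃` and `A₁₃ = A₁₂ (A₂₂+I)⁻¹ A₂₃`. -/
theorem markov_necessary_condition
    (A11 : Matrix (Fin n1) (Fin n1) ℂ) (A12 : Matrix (Fin n1) (Fin n2) ℂ)
    (A13 : Matrix (Fin n1) (Fin n3) ℂ) (A21 : Matrix (Fin n2) (Fin n1) ℂ)
    (A22 : Matrix (Fin n2) (Fin n2) ℂ) (A23 : Matrix (Fin n2) (Fin n3) ℂ)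
    (A31 : Matrix (Fin n3) (Fin n1) ℂ) (A32 : Matrix (Fin n3) (Fin n2) ℂ)
    (A33 : Matrix (Fin n3) (Fin n3) ℂ)
    (hA : (blockA A11 A12 A13 A21 A22 A23 A31 A32 A33).PosDef)
    (hA22 : IsUnit A22)
    (hmain :
      (blockA A11 A12 A13 A21 A22 A23 A31 A32 A33)⁻¹
          * (1 + blockA A11 A12 A13 A21 A22 A23 A31 A32 A33)
          * blockD (n1 := n1) A22 A23 A32 A33
          * (1 + blockD (n1 := n1) A22 A23 A32 A33)⁻¹
        = (blockB (n3 := n3) A11 A12 A21 A22)⁻¹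
          * (1 + blockB (n3 := n3) A11 A12 A21 A22)
          * blockC (n1 := n1) (n3 := n3) A22
          * (1 + blockC (n1 := n1) (n3 := n3) A22)⁻¹) :
    A13 = A12 * A22⁻¹ * A23 ∧ A13 = A12 * (A22 + 1)⁻¹ * A23 :=
  markov_necessary_condition_general A11 A12 A13 A21 A22 A23 A31 A32 A33 hA hmain
end

section
/- Let A be an invertible positive definite 3×3 block matrix with blocks A_{ij}, and suppose its inverse X = A⁻¹ has X_{13} = 0. Then X_{11} = (A_{11} − A_{12} A_{22}⁻¹ A_{21})⁻¹ and X_{33} = (A_{33} − A_{32} A_{22}⁻¹ A_{23})⁻¹, assuming A_{22}, A_{11} − A_{12}A_{22}⁻¹A_{21}, and A_{33} − A_{32}A_{22}⁻¹A_{23} are invertible and A_{13} = A_{12} A_{22}⁻¹ A_{23}. -/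
open Matrix
open scoped ComplexOrder

variable {n1 n2 n3 : ℕ}

/-!
Write `X = A⁻¹` in blocks. Once `X₁₃ = 0`, the third block column of `A * X = 1` reads
`A₂₂ X₂₃ + A₂₃ X₃₃ = 0` and `A₃₂ X₂₃ + A₃₃ X₃₃ = 1`; eliminating `X₂₃ = -A₂₂⁻¹ A₂₃ X₃₃` leaves
`(A₃₃ - A₃₂ A₂₂⁻¹ A₂₃) X₃₃ = 1`. In the same way the first block row of `X * A = 1` gives
`X₁₁ (A₁₁ - A₁₂ A₂₂⁻¹ A₂₁) = 1`, and a one-sided inverse of a square matrix is its inverse.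
-/

namespace Matrix

variable {m n R : Type*} [Fintype m] [Fintype n] [DecidableEq m] [DecidableEq n] [CommRing R]
  {B : Matrix n n R} {C : Matrix n m R} {D : Matrix m n R} {E : Matrix m m R}

theorem eq_inv_schur_of_column_eqns (hB : IsUnit B) {Y : Matrix n m R} {Z : Matrix m m R}
    (h0 : B * Y + C * Z = 0) (h1 : D * Y + E * Z = 1) : Z = (E - D * B⁻¹ * C)⁻¹ := by
  have hY : Y = -(B⁻¹ * C * Z) := by
    rw [← B.nonsing_inv_mul_cancel_left Y (B.isUnit_iff_isUnit_det.mp hB),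
      eq_neg_of_add_eq_zero_left h0, Matrix.mul_neg, Matrix.mul_assoc]
  refine (inv_eq_right_inv ?_).symm
  rw [← h1, hY]
  simp only [Matrix.sub_mul, Matrix.mul_neg, Matrix.mul_assoc]
  abel

theorem eq_inv_schur_of_row_eqns (hB : IsUnit B) {Y : Matrix m n R} {Z : Matrix m m R}
    (h0 : Z * D + Y * B = 0) (h1 : Z * E + Y * C = 1) : Z = (E - D * B⁻¹ * C)⁻¹ := by
  have hY : Y = -(Z * D * B⁻¹) := by
    rw [← B.mul_nonsing_inv_cancel_right Y (B.isUnit_iff_isUnit_det.mp hB),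
      eq_neg_of_add_eq_zero_right h0, Matrix.neg_mul]
  refine (inv_eq_left_inv ?_).symm
  rw [← h1, hY]
  simp only [Matrix.mul_sub, Matrix.neg_mul, Matrix.mul_assoc]
  abel

end Matrix

section BlockA

variable (A11 : Matrix (Fin n1) (Fin n1) ℂ) (A12 : Matrix (Fin n1) (Fin n2) ℂ)
    (A13 : Matrix (Fin n1) (Fin n3) ℂ) (A21 : Matrix (Fin n2) (Fin n1) ℂ)
    (A22 : Matrix (Fin n2) (Fin n2) ℂ) (A23 : Matrix (Fin n2) (Fin n3) ℂ)
    (A31 : Matrix (Fin n3) (Fin n1) ℂ) (A32 : Matrix (Fin n3) (Fin n2) ℂ)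
    (A33 : Matrix (Fin n3) (Fin n3) ℂ)
    (B11 : Matrix (Fin n1) (Fin n1) ℂ) (B12 : Matrix (Fin n1) (Fin n2) ℂ)
    (B13 : Matrix (Fin n1) (Fin n3) ℂ) (B21 : Matrix (Fin n2) (Fin n1) ℂ)
    (B22 : Matrix (Fin n2) (Fin n2) ℂ) (B23 : Matrix (Fin n2) (Fin n3) ℂ)
    (B31 : Matrix (Fin n3) (Fin n1) ℂ) (B32 : Matrix (Fin n3) (Fin n2) ℂ)
    (B33 : Matrix (Fin n3) (Fin n3) ℂ)

theorem exists_eq_blockA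
    (M : Matrix ((Fin n1 ⊕ Fin n2) ⊕ Fin n3) ((Fin n1 ⊕ Fin n2) ⊕ Fin n3) ℂ) :
    ∃ X11 X12 X13 X21 X22 X23 X31 X32 X33, M = blockA X11 X12 X13 X21 X22 X23 X31 X32 X33 :=
  ⟨_, _, _, _, _, _, _, _, _, (fromBlocks_toBlocks M).symm.trans <| by
    rw [← fromBlocks_toBlocks M.toBlocks₁₁, ← fromRows_toRows M.toBlocks₁₂,
      ← fromCols_toCols M.toBlocks₂₁]; rfl⟩

theorem blockA_mul_blockA :
    blockA A11 A12 A13 A21 A22 A23 A31 A32 A33 * blockA B11 B12 B13 B21 B22 B23 B31 B32 B33 =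
      blockA (A11 * B11 + A12 * B21 + A13 * B31) (A11 * B12 + A12 * B22 + A13 * B32)
        (A11 * B13 + A12 * B23 + A13 * B33) (A21 * B11 + A22 * B21 + A23 * B31)
        (A21 * B12 + A22 * B22 + A23 * B32) (A21 * B13 + A22 * B23 + A23 * B33)
        (A31 * B11 + A32 * B21 + A33 * B31) (A31 * B12 + A32 * B22 + A33 * B32)
        (A31 * B13 + A32 * B23 + A33 * B33) := by
  ext ((i | i) | i) ((j | j) | j) <;>
    simp [blockA, mul_apply, Fintype.sum_sum_type, add_assoc]

theorem blockA_one : blockA (n1 := n1) (n2 := n2) (n3 := n3) 1 0 0 0 1 0 0 0 1 = 1 := by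
  simp [blockA, fromBlocks_one]

theorem blockA_inj :
    blockA A11 A12 A13 A21 A22 A23 A31 A32 A33 = blockA B11 B12 B13 B21 B22 B23 B31 B32 B33 ↔
      A11 = B11 ∧ A12 = B12 ∧ A13 = B13 ∧ A21 = B21 ∧ A22 = B22 ∧ A23 = B23 ∧
        A31 = B31 ∧ A32 = B32 ∧ A33 = B33 := by
  simp only [blockA, fromBlocks_inj, fromRows_ext_iff, fromCols_ext_iff, and_assoc]
  tauto

end BlockA

theorem inverse_corner_blocks_general
    (A11 : Matrix (Fin n1) (Fin n1) ℂ) (A12 : Matrix (Fin n1) (Fin n2) ℂ)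
    (A13 : Matrix (Fin n1) (Fin n3) ℂ) (A21 : Matrix (Fin n2) (Fin n1) ℂ)
    (A22 : Matrix (Fin n2) (Fin n2) ℂ) (A23 : Matrix (Fin n2) (Fin n3) ℂ)
    (A31 : Matrix (Fin n3) (Fin n1) ℂ) (A32 : Matrix (Fin n3) (Fin n2) ℂ)
    (A33 : Matrix (Fin n3) (Fin n3) ℂ)
    (hA : (blockA A11 A12 A13 A21 A22 A23 A31 A32 A33).PosDef)
    (hA22 : IsUnit A22)
    (hX13 : (Matrix.of fun (i : Fin n1) (j : Fin n3) =>
        (blockA A11 A12 A13 A21 A22 A23 A31 A32 A33)⁻¹ (Sum.inl (Sum.inl i)) (Sum.inr j))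
      = 0) :
    (Matrix.of fun (i : Fin n1) (j : Fin n1) =>
        (blockA A11 A12 A13 A21 A22 A23 A31 A32 A33)⁻¹ (Sum.inl (Sum.inl i))
          (Sum.inl (Sum.inl j)))
      = (A11 - A12 * A22⁻¹ * A21)⁻¹ ∧
    (Matrix.of fun (i : Fin n3) (j : Fin n3) =>
        (blockA A11 A12 A13 A21 A22 A23 A31 A32 A33)⁻¹ (Sum.inr i) (Sum.inr j))
      = (A33 - A32 * A22⁻¹ * A23)⁻¹ := by
  set A := blockA A11 A12 A13 A21 A22 A23 A31 A32 A33
  have hdet : IsUnit A.det := A.isUnit_iff_isUnit_det.mp hA.isUnit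
  have hAX := A.mul_nonsing_inv hdet
  have hXA := A.nonsing_inv_mul hdet
  obtain ⟨X11, X12, X13, X21, X22, X23, X31, X32, X33, hX⟩ := exists_eq_blockA A⁻¹
  rw [hX] at hX13 hAX hXA ⊢
  obtain rfl : X13 = 0 := hX13
  show X11 = _ ∧ X33 = _
  rw [blockA_mul_blockA, ← blockA_one, blockA_inj] at hAX hXA
  obtain ⟨-, -, -, -, -, h23, -, -, h33⟩ := hAX
  obtain ⟨h11, h12, -⟩ := hXA
  simp only [Matrix.mul_zero, Matrix.zero_mul, add_zero, zero_add] at h11 h12 h23 h33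
  exact ⟨eq_inv_schur_of_row_eqns hA22 h12 h11, eq_inv_schur_of_column_eqns hA22 h23 h33⟩

/-- For a positive definite 3×3 block matrix `A` whose inverse `X = A⁻¹` has vanishing
`(1,3)` block (equivalently `A₁₃ = A₁₂ A₂₂⁻¹ A₂₃`), the corner blocks of `X` are the
inverse Schur complements: `X₁₁ = (A₁₁ − A₁₂A₂₂⁻¹A₂₁)⁻¹` and
`X₃₃ = (A₃₃ − A₃₂A₂₂⁻¹A₂₃)⁻¹`. -/
theorem inverse_corner_blocks
    (A11 : Matrix (Fin n1) (Fin n1) ℂ) (A12 : Matrix (Fin n1) (Fin n2) ℂ)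
    (A13 : Matrix (Fin n1) (Fin n3) ℂ) (A21 : Matrix (Fin n2) (Fin n1) ℂ)
    (A22 : Matrix (Fin n2) (Fin n2) ℂ) (A23 : Matrix (Fin n2) (Fin n3) ℂ)
    (A31 : Matrix (Fin n3) (Fin n1) ℂ) (A32 : Matrix (Fin n3) (Fin n2) ℂ)
    (A33 : Matrix (Fin n3) (Fin n3) ℂ)
    (hA : (blockA A11 A12 A13 A21 A22 A23 A31 A32 A33).PosDef)
    (hA22 : IsUnit A22)
    (hS1 : IsUnit (A11 - A12 * A22⁻¹ * A21))
    (hS3 : IsUnit (A33 - A32 * A22⁻¹ * A23))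
    (h13 : A13 = A12 * A22⁻¹ * A23)
    (hX13 : (Matrix.of fun (i : Fin n1) (j : Fin n3) =>
        (blockA A11 A12 A13 A21 A22 A23 A31 A32 A33)⁻¹ (Sum.inl (Sum.inl i)) (Sum.inr j))
      = 0) :
    (Matrix.of fun (i : Fin n1) (j : Fin n1) =>
        (blockA A11 A12 A13 A21 A22 A23 A31 A32 A33)⁻¹ (Sum.inl (Sum.inl i))
          (Sum.inl (Sum.inl j)))
      = (A11 - A12 * A22⁻¹ * A21)⁻¹ ∧
    (Matrix.of fun (i : Fin n3) (j : Fin n3) =>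
        (blockA A11 A12 A13 A21 A22 A23 A31 A32 A33)⁻¹ (Sum.inr i) (Sum.inr j))
      = (A33 - A32 * A22⁻¹ * A23)⁻¹ :=
  inverse_corner_blocks_general A11 A12 A13 A21 A22 A23 A31 A32 A33 hA hA22 hX13
end

section
/- Suppose A is a block matrix on H₁ ⊕ H₂ ⊕ H₃ that is block diagonal with respect to a decomposition H₂ = K_a ⊕ K_b, of the form A = Diag(A₁, A₂) where A₁ = [[A_{11}, a],[a*, c]] acts on H₁ ⊕ K_a and A₂ = [[d, b],[b*, A_{33}]] acts on K_b ⊕ H₃ (so A_{13} = 0, A_{12} = [a 0], A_{23} = [0; b], A_{22} = Diag(c, d)). Then for any two functions f, g with f·g = 1 (applied via functional calculus to positive definite matrices), f(A) g(D) = f(B) g(C), where D = Diag(I, [[A_{22},A_{23}],[A_{32},A_{33}]]), B = Diag([[A_{11},A_{12}],[A_{21},A_{22}]], I), C = Diag(I, A_{22}, I). -/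
/-!
All four matrices are block diagonal with respect to `(H₁ ⊕ K_a) ⊕ (K_b ⊕ H₃)`, and the
functional calculus acts blockwise. `A` and `B` share the first block `A₁`, while `D` and `C`
share the first block `Diag(I, c)`. In the second block `D` agrees with `A` and `C` agrees with
`B`, so there `f(A₂) g(A₂) = 1 = f(B₂) g(B₂)` because `f g = 1` on the (positive) spectrum.
Hence both sides equal `Diag(f(A₁) g(Diag(I, c)), I)`.
-/

open Matrix
open scoped ComplexOrder

variable {n1 ka kb n3 : ℕ}

/-- The block-diagonal matrix `A = Diag(A₁, A₂)` on `(H₁ ⊕ K_a) ⊕ (K_b ⊕ H₃)`, where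
`A₁ = [[A₁₁, a],[a*, c]]` and `A₂ = [[d, b],[b*, A₃₃]]`.  With respect to the triple
decomposition `H₁ ⊕ (K_a ⊕ K_b) ⊕ H₃` this means `A₁₃ = 0`, `A₁₂ = [a 0]`,
`A₂₃ = [0; b]` and `A₂₂ = Diag(c, d)`. -/
def diagA (A11 : Matrix (Fin n1) (Fin n1) ℂ) (a : Matrix (Fin n1) (Fin ka) ℂ)
    (c : Matrix (Fin ka) (Fin ka) ℂ) (d : Matrix (Fin kb) (Fin kb) ℂ)
    (b : Matrix (Fin kb) (Fin n3) ℂ) (A33 : Matrix (Fin n3) (Fin n3) ℂ) :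
    Matrix ((Fin n1 ⊕ Fin ka) ⊕ (Fin kb ⊕ Fin n3)) ((Fin n1 ⊕ Fin ka) ⊕ (Fin kb ⊕ Fin n3)) ℂ :=
  fromBlocks (fromBlocks A11 a aᴴ c) 0 0 (fromBlocks d b bᴴ A33)

/-- `D = Diag(I_{H₁}, [[A₂₂,A₂₃],[A₃₂,A₃₃]])` for the above `A`. -/
def diagD (c : Matrix (Fin ka) (Fin ka) ℂ) (d : Matrix (Fin kb) (Fin kb) ℂ)
    (b : Matrix (Fin kb) (Fin n3) ℂ) (A33 : Matrix (Fin n3) (Fin n3) ℂ) :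
    Matrix ((Fin n1 ⊕ Fin ka) ⊕ (Fin kb ⊕ Fin n3)) ((Fin n1 ⊕ Fin ka) ⊕ (Fin kb ⊕ Fin n3)) ℂ :=
  fromBlocks (fromBlocks 1 0 0 c) 0 0 (fromBlocks d b bᴴ A33)

/-- `B = Diag([[A₁₁,A₁₂],[A₂₁,A₂₂]], I_{H₃})` for the above `A`. -/
def diagB (A11 : Matrix (Fin n1) (Fin n1) ℂ) (a : Matrix (Fin n1) (Fin ka) ℂ)
    (c : Matrix (Fin ka) (Fin ka) ℂ) (d : Matrix (Fin kb) (Fin kb) ℂ) :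
    Matrix ((Fin n1 ⊕ Fin ka) ⊕ (Fin kb ⊕ Fin n3)) ((Fin n1 ⊕ Fin ka) ⊕ (Fin kb ⊕ Fin n3)) ℂ :=
  fromBlocks (fromBlocks A11 a aᴴ c) 0 0 (fromBlocks d 0 0 1)

/-- `C = Diag(I_{H₁}, A₂₂, I_{H₃})` for the above `A`. -/
def diagC (c : Matrix (Fin ka) (Fin ka) ℂ) (d : Matrix (Fin kb) (Fin kb) ℂ) :
    Matrix ((Fin n1 ⊕ Fin ka) ⊕ (Fin kb ⊕ Fin n3)) ((Fin n1 ⊕ Fin ka) ⊕ (Fin kb ⊕ Fin n3)) ℂ :=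
  fromBlocks (fromBlocks 1 0 0 c) 0 0 (fromBlocks d 0 0 1)

namespace Matrix

section BlockDiagonal

variable {p q : Type*} [Fintype p] [Fintype q] [DecidableEq p] [DecidableEq q]
  (S : Type*) {α : Type*} [CommSemiring S] [Semiring α] [Algebra S α]

def fromBlocksDiagonalAlgHom : Matrix p p α × Matrix q q α →ₐ[S] Matrix (p ⊕ q) (p ⊕ q) α where
  toFun X := fromBlocks X.1 0 0 X.2
  map_one' := fromBlocks_one
  map_mul' X Y := by simp [fromBlocks_multiply]
  map_zero' := fromBlocks_zero
  map_add' X Y := by simp [fromBlocks_add]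
  commutes' r := by
    simp only [Algebra.algebraMap_eq_smul_one, Prod.smul_fst, Prod.smul_snd, Prod.fst_one,
      Prod.snd_one, ← fromBlocks_one, fromBlocks_smul, smul_zero]

def fromBlocksDiagonalStarAlgHom [StarRing α] :
    Matrix p p α × Matrix q q α →⋆ₐ[S] Matrix (p ⊕ q) (p ⊕ q) α where
  __ := fromBlocksDiagonalAlgHom S
  map_star' X := by
    simp [fromBlocksDiagonalAlgHom, star_eq_conjTranspose, fromBlocks_conjTranspose]

@[simp]
lemma fromBlocksDiagonalStarAlgHom_apply [StarRing α] (X : Matrix p p α × Matrix q q α) :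
    fromBlocksDiagonalStarAlgHom S X = fromBlocks X.1 0 0 X.2 := rfl

lemma continuous_fromBlocksDiagonalStarAlgHom [StarRing α] [TopologicalSpace α] :
    Continuous (fromBlocksDiagonalStarAlgHom S : Matrix p p α × Matrix q q α →⋆ₐ[S] _) :=
  Continuous.matrix_fromBlocks (by fun_prop) continuous_const continuous_const (by fun_prop)

end BlockDiagonal

section PosDef

variable {p q 𝕜 : Type*} [RCLike 𝕜]

lemma PosDef.of_fromBlocks₁₁ {X : Matrix p p 𝕜} {B : Matrix p q 𝕜} {C : Matrix q p 𝕜}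
    {Y : Matrix q q 𝕜} (h : (fromBlocks X B C Y).PosDef) : X.PosDef :=
  h.submatrix Sum.inl_injective

lemma PosDef.of_fromBlocks₂₂ {X : Matrix p p 𝕜} {B : Matrix p q 𝕜} {C : Matrix q p 𝕜}
    {Y : Matrix q q 𝕜} (h : (fromBlocks X B C Y).PosDef) : Y.PosDef :=
  h.submatrix Sum.inr_injective

variable [Fintype p] [Fintype q] [DecidableEq p] [DecidableEq q]

lemma PosDef.fromBlocks_zero {X : Matrix p p 𝕜} {Y : Matrix q q 𝕜} (hX : X.PosDef)
    (hY : Y.PosDef) : (fromBlocks X 0 0 Y).PosDef := by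
  have := hX.isUnit.invertible
  have hXY : (fromBlocks X 0 0 Y).PosSemidef := by
    simpa using (PosDef.fromBlocks₁₁ 0 Y hX).mpr (by simpa using hY.posSemidef)
  exact hXY.posDef_iff_isUnit.mpr (isUnit_fromBlocks_zero₂₁.mpr ⟨hX.isUnit, hY.isUnit⟩)

lemma PosDef.cfc_mul_cfc_eq_one {M : Matrix p p 𝕜} (hM : M.PosDef) {f g : ℝ → ℝ}
    (hfg : ∀ x > (0 : ℝ), f x * g x = 1) : cfc f M * cfc g M = 1 := by
  rw [← cfc_mul f g M (M.finite_real_spectrum.continuousOn f)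
    (M.finite_real_spectrum.continuousOn g), ← cfc_one ℝ M hM.isHermitian.isSelfAdjoint]
  refine cfc_congr fun x hx => hfg x ?_
  obtain ⟨i, rfl⟩ := hM.isHermitian.spectrum_real_eq_range_eigenvalues ▸ hx
  exact hM.eigenvalues_pos i

end PosDef

section FunctionalCalculus

variable {p q : Type*} [Fintype p] [Fintype q] [DecidableEq p] [DecidableEq q]

lemma spectrum_fromBlocks_zero {R 𝕜 : Type*} [CommSemiring R] [CommRing 𝕜] [Algebra R 𝕜]
    (X : Matrix p p 𝕜) (Y : Matrix q q 𝕜) :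
    spectrum R (fromBlocks X 0 0 Y) = spectrum R X ∪ spectrum R Y := by
  ext r
  have h : algebraMap R _ r - fromBlocks X 0 0 Y
      = fromBlocks (algebraMap R _ r - X) 0 0 (algebraMap R _ r - Y) := by
    rw [← AlgHomClass.commutes (fromBlocksDiagonalAlgHom R (p := p) (q := q) (α := 𝕜)) r]
    exact (map_sub (fromBlocksDiagonalAlgHom R) _ (X, Y)).symm
  simp only [spectrum.mem_iff, h, isUnit_fromBlocks_zero₂₁, Set.mem_union, not_and_or]

/- By uniqueness of the continuous functional calculus, `cfcHom` of the block matrix is the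
blockwise calculus, which is a continuous star-algebra map sending the identity to it. -/
lemma cfc_fromBlocks_zero {𝕜 : Type*} [RCLike 𝕜] (f : ℝ → ℝ) {X : Matrix p p 𝕜}
    {Y : Matrix q q 𝕜} (hX : X.IsHermitian) (hY : Y.IsHermitian) :
    cfc f (fromBlocks X 0 0 Y) = fromBlocks (cfc f X) 0 0 (cfc f Y) := by
  set M := fromBlocks X 0 0 Y
  have hM : M.IsHermitian := hX.fromBlocks (by simp) hY
  have hsX : spectrum ℝ X ⊆ spectrum ℝ M := by
    rw [spectrum_fromBlocks_zero]; exact Set.subset_union_left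
  have hsY : spectrum ℝ Y ⊆ spectrum ℝ M := by
    rw [spectrum_fromBlocks_zero]; exact Set.subset_union_right
  let ιX : C(spectrum ℝ X, spectrum ℝ M) := ⟨Set.inclusion hsX, by fun_prop⟩
  let ιY : C(spectrum ℝ Y, spectrum ℝ M) := ⟨Set.inclusion hsY, by fun_prop⟩
  let Ψ := (fromBlocksDiagonalStarAlgHom ℝ).comp
    (((cfcHom hX.isSelfAdjoint).comp (ContinuousMap.compStarAlgHom' ℝ ℝ ιX)).prod
      ((cfcHom hY.isSelfAdjoint).comp (ContinuousMap.compStarAlgHom' ℝ ℝ ιY)))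
  have hΨ : cfcHom hM.isSelfAdjoint = Ψ := by
    refine cfcHom_eq_of_continuous_of_map_id hM.isSelfAdjoint Ψ ?_ ?_
    · simp only [Ψ, StarAlgHom.coe_comp, StarAlgHom.coe_prod]
      refine (continuous_fromBlocksDiagonalStarAlgHom ℝ).comp (.prodMk ?_ ?_) <;>
        exact (cfcHom_continuous _).comp (ContinuousMap.continuous_precomp _)
    · have hidX : (ContinuousMap.restrict (spectrum ℝ M) (.id ℝ)).comp ιX
          = .restrict (spectrum ℝ X) (.id ℝ) := by ext; rfl
      have hidY : (ContinuousMap.restrict (spectrum ℝ M) (.id ℝ)).comp ιY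
          = .restrict (spectrum ℝ Y) (.id ℝ) := by ext; rfl
      simp only [Ψ, StarAlgHom.comp_apply, StarAlgHom.prod_apply,
        fromBlocksDiagonalStarAlgHom_apply, ContinuousMap.compStarAlgHom'_apply, hidX, hidY,
        cfcHom_id, M]
  rw [cfc_apply f M hM.isSelfAdjoint (M.finite_real_spectrum.continuousOn f),
    cfc_apply f X hX.isSelfAdjoint (X.finite_real_spectrum.continuousOn f),
    cfc_apply f Y hY.isSelfAdjoint (Y.finite_real_spectrum.continuousOn f), hΨ]
  rfl

end FunctionalCalculus

end Matrix

theorem blockDiagonal_markov_identity_general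
    (A11 : Matrix (Fin n1) (Fin n1) ℂ) (a : Matrix (Fin n1) (Fin ka) ℂ)
    (c : Matrix (Fin ka) (Fin ka) ℂ) (d : Matrix (Fin kb) (Fin kb) ℂ)
    (b : Matrix (Fin kb) (Fin n3) ℂ) (A33 : Matrix (Fin n3) (Fin n3) ℂ)
    (hA : (diagA A11 a c d b A33).PosDef)
    (f g : ℝ → ℝ)
    (hfg : ∀ x > (0 : ℝ), f x * g x = 1) :
    cfc f (diagA A11 a c d b A33) * cfc g (diagD (n1 := n1) c d b A33)
      = cfc f (diagB (n3 := n3) A11 a c d) * cfc g (diagC (n1 := n1) (n3 := n3) c d) := by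
  have hA₁ : (fromBlocks A11 a aᴴ c).PosDef := hA.of_fromBlocks₁₁
  have hA₂ : (fromBlocks d b bᴴ A33).PosDef := hA.of_fromBlocks₂₂
  have hD₁ : (fromBlocks (1 : Matrix (Fin n1) (Fin n1) ℂ) 0 0 c).PosDef :=
    PosDef.one.fromBlocks_zero hA₁.of_fromBlocks₂₂
  have hB₂ : (fromBlocks d 0 0 (1 : Matrix (Fin n3) (Fin n3) ℂ)).PosDef :=
    hA₂.of_fromBlocks₁₁.fromBlocks_zero PosDef.one
  rw [diagA, diagB, diagC, diagD, cfc_fromBlocks_zero f hA₁.1 hA₂.1,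
    cfc_fromBlocks_zero g hD₁.1 hA₂.1, cfc_fromBlocks_zero f hA₁.1 hB₂.1,
    cfc_fromBlocks_zero g hD₁.1 hB₂.1, fromBlocks_multiply, fromBlocks_multiply,
    hA₂.cfc_mul_cfc_eq_one hfg, hB₂.cfc_mul_cfc_eq_one hfg]
  simp only [Matrix.mul_zero, Matrix.zero_mul, add_zero, zero_add]

/-- If `A` is positive definite and block diagonal of the above form, then for any
continuous functions `f, g` on `(0,∞)` with `f·g = 1` (applied via the continuous
functional calculus), `f(A) g(D) = f(B) g(C)`. -/
theorem blockDiagonal_markov_identity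
    (A11 : Matrix (Fin n1) (Fin n1) ℂ) (a : Matrix (Fin n1) (Fin ka) ℂ)
    (c : Matrix (Fin ka) (Fin ka) ℂ) (d : Matrix (Fin kb) (Fin kb) ℂ)
    (b : Matrix (Fin kb) (Fin n3) ℂ) (A33 : Matrix (Fin n3) (Fin n3) ℂ)
    (hA : (diagA A11 a c d b A33).PosDef)
    (f g : ℝ → ℝ) (hf : ContinuousOn f (Set.Ioi 0)) (hg : ContinuousOn g (Set.Ioi 0))
    (hfg : ∀ x > (0 : ℝ), f x * g x = 1) :
    cfc f (diagA A11 a c d b A33) * cfc g (diagD (n1 := n1) c d b A33)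
      = cfc f (diagB (n3 := n3) A11 a c d) * cfc g (diagC (n1 := n1) (n3 := n3) c d) :=
  blockDiagonal_markov_identity_general A11 a c d b A33 hA f g hfg
end
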